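/- arXiv:math/0608139 — 6 statements merged into one kernel-verified Lean document; each statement's English description precedes it below -/
import Mathlib

section
/- Let X and Y be uniform spaces, let F be a set of bounded functions f : X × Y → ℝ such that the family {x ↦ f(x,y) : f ∈ F, y ∈ Y} is uniformly equicontinuous on X and for each x ∈ X the family {y ↦ f(x,y) : f ∈ F} is uniformly equicontinuous on Y, and let B ⊆ Meas(Y) be such that s = sup{‖ν‖ : ν ∈ B} is finite. For f ∈ F and ν ∈ B define (ν♭f)(x) = ν(y ↦ f(x,y)) (each section y ↦ f(x,y) lies in Ub(Y), so this is well defined). Then ‖ν♭f‖ ≤ s·‖f‖ for every f ∈ F and ν ∈ B, and the set {ν♭f : f ∈ F, ν ∈ B} of functions on X is uniformly equicontinuous. -/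
noncomputable section

open Filter Topology

/-- `f` is a bounded uniformly continuous real-valued function,
i.e. a member of `Ub(X)`. -/
def IsUb {X : Type*} [UniformSpace X] (f : X → ℝ) : Prop :=
  UniformContinuous f ∧ ∃ C : ℝ, ∀ x, |f x| ≤ C

/-- Supremum norm of a real-valued function. -/
def supNorm {α : Type*} (f : α → ℝ) : ℝ :=
  sSup (Set.range fun x => |f x|)

/-- `μ` is (the restriction to `Ub(X)` of) a norm-continuous linear functional on `Ub(X)`,
i.e. a member of `Meas(X)`.  It is represented as a bare map on all functions;
only its values on `Ub(X)` are relevant. -/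
def IsMeas {X : Type*} [UniformSpace X] (μ : (X → ℝ) → ℝ) : Prop :=
  (∀ f g : X → ℝ, IsUb f → IsUb g → μ (f + g) = μ f + μ g) ∧
  (∀ (c : ℝ) (f : X → ℝ), IsUb f → μ (c • f) = c * μ f) ∧
  (∃ C : ℝ, ∀ f : X → ℝ, IsUb f → (∀ x, |f x| ≤ 1) → |μ f| ≤ C)

/-- The dual norm on `Meas(X)`:  `‖μ‖ = sup {|μ f| : f ∈ Ub(X), ‖f‖ ≤ 1}`. -/
def measNorm {X : Type*} [UniformSpace X] (μ : (X → ℝ) → ℝ) : ℝ :=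
  sSup {r : ℝ | ∃ f : X → ℝ, IsUb f ∧ (∀ x, |f x| ≤ 1) ∧ r = |μ f|}

/-- `μ` is a positive functional:  `μ f ≥ 0` whenever `f ∈ Ub(X)` and `f ≥ 0`. -/
def IsPositive {X : Type*} [UniformSpace X] (μ : (X → ℝ) → ℝ) : Prop :=
  ∀ f : X → ℝ, IsUb f → (∀ x, 0 ≤ f x) → 0 ≤ μ f

/-- `μ` is a *uniform measure*: on every norm-bounded uniformly equicontinuous set
`H ⊆ Ub(X)`, `μ` is continuous for the topology of pointwise convergence. -/
def IsUniformMeasure {X : Type*} [UniformSpace X] (μ : (X → ℝ) → ℝ) : Prop :=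
  ∀ H : Set (X → ℝ),
    (∃ C : ℝ, ∀ f ∈ H, ∀ x, |f x| ≤ C) →
    H.UniformEquicontinuous →
    ∀ f₀ ∈ H, ∀ ε : ℝ, 0 < ε →
      ∃ (K : Finset X) (δ : ℝ), 0 < δ ∧
        ∀ f ∈ H, (∀ x ∈ K, |f x - f₀ x| < δ) → |μ f - μ f₀| < ε

/-- A *semiuniform* function on `X × Y`, i.e. a member of `Ub(X ⋉ Y)` where `X ⋉ Y` is the
semiuniform product: `f` is bounded, the family of sections `x ↦ f (x, y)` (for `y ∈ Y`)
is uniformly equicontinuous on `X`, and every section `y ↦ f (x, y)` is uniformly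
continuous on `Y`. -/
def Semiuniform {X Y : Type*} [UniformSpace X] [UniformSpace Y] (f : X × Y → ℝ) : Prop :=
  (∃ C : ℝ, ∀ p, |f p| ≤ C) ∧
  UniformEquicontinuous (fun y : Y => fun x : X => f (x, y)) ∧
  ∀ x : X, UniformContinuous fun y : Y => f (x, y)

/-- The direct product `μ ⊗ ν`, evaluated at `f : X × Y → ℝ`:
`(μ ⊗ ν)(f) = μ (x ↦ ν (y ↦ f (x, y)))`. -/
def dirProd {X Y : Type*} (μ : (X → ℝ) → ℝ) (ν : (Y → ℝ) → ℝ) (f : X × Y → ℝ) : ℝ :=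
  μ fun x => ν fun y => f (x, y)

/-- Convolution: `(μ ⋆ ν)(f) = μ (x ↦ ν (y ↦ f (x · y)))`. -/
def conv {G : Type*} [Mul G] (μ ν : (G → ℝ) → ℝ) : (G → ℝ) → ℝ :=
  fun f => μ fun x => ν fun y => f (x * y)

/-- The weak-* topology on `Meas(X)`: the topology of pointwise convergence on `Ub(X)`. -/
def weakStarMeas (X : Type*) [UniformSpace X] :
    TopologicalSpace {ν : (X → ℝ) → ℝ // IsMeas ν} :=
  TopologicalSpace.induced
    (fun ν => fun f : {f : X → ℝ // IsUb f} => ν.1 f.1) Pi.topologicalSpace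

lemma measNorm_bddAbove {X : Type*} [UniformSpace X] {μ : (X → ℝ) → ℝ} (hμ : IsMeas μ) :
    BddAbove {r : ℝ | ∃ f : X → ℝ, IsUb f ∧ (∀ x, |f x| ≤ 1) ∧ r = |μ f|} := by
  obtain ⟨C, hC⟩ := hμ.2.2
  exact ⟨C, fun r ⟨f, hf, hf1, hr⟩ => hr ▸ hC f hf hf1⟩

lemma isUb_zero {X : Type*} [UniformSpace X] : IsUb (0 : X → ℝ) :=
  ⟨uniformContinuous_const, 0, fun x => by simp⟩

lemma meas_zero {X : Type*} [UniformSpace X] {μ : (X → ℝ) → ℝ} (hμ : IsMeas μ) : μ 0 = 0 := by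
  have := hμ.2.1 0 0 isUb_zero
  simpa using this

lemma measNorm_nonneg {X : Type*} [UniformSpace X] {μ : (X → ℝ) → ℝ} (hμ : IsMeas μ) :
    0 ≤ measNorm μ := by
  have h0 : (0 : ℝ) ∈ {r : ℝ | ∃ f : X → ℝ, IsUb f ∧ (∀ x, |f x| ≤ 1) ∧ r = |μ f|} :=
    ⟨0, isUb_zero, fun x => by simp, by simp [meas_zero hμ]⟩
  exact le_csSup (measNorm_bddAbove hμ) h0

lemma supNorm_nonneg {α : Type*} (f : α → ℝ) : 0 ≤ supNorm f :=
  Real.sSup_nonneg (by rintro x ⟨y, rfl⟩; positivity)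

lemma le_supNorm {α : Type*} {f : α → ℝ} {C : ℝ} (hC : ∀ x, |f x| ≤ C) (x : α) :
    |f x| ≤ supNorm f :=
  le_csSup ⟨C, by rintro r ⟨y, rfl⟩; exact hC y⟩ ⟨x, rfl⟩

lemma supNorm_le {α : Type*} {f : α → ℝ} {C : ℝ} (hC0 : 0 ≤ C) (hC : ∀ x, |f x| ≤ C) :
    supNorm f ≤ C :=
  Real.sSup_le (by rintro r ⟨y, rfl⟩; exact hC y) hC0

lemma meas_abs_le {Y : Type*} [UniformSpace Y] {ν : (Y → ℝ) → ℝ} (hν : IsMeas ν)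
    {g : Y → ℝ} (hg : IsUb g) : |ν g| ≤ measNorm ν * supNorm g := by
  set N := measNorm ν with hN
  set M := supNorm g with hM
  have hN0 : 0 ≤ N := measNorm_nonneg hν
  have hM0 : 0 ≤ M := supNorm_nonneg g
  obtain ⟨C, hC⟩ := hg.2
  have hgM : ∀ y, |g y| ≤ M := le_supNorm hC
  have key : ∀ ε : ℝ, 0 < ε → |ν g| ≤ (M + ε) * N := by
    intro ε hε
    have hc : (0:ℝ) < M + ε := by linarith
    set h : Y → ℝ := (M + ε)⁻¹ • g with hdef
    have hhub : IsUb h := by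
      refine ⟨hg.1.const_smul _, (M+ε)⁻¹ * C, fun y => ?_⟩
      have : |h y| = (M+ε)⁻¹ * |g y| := by
        simp [hdef, abs_mul, abs_of_pos (inv_pos.mpr hc)]
      rw [this]
      exact mul_le_mul_of_nonneg_left (hC y) (by positivity)
    have hh1 : ∀ y, |h y| ≤ 1 := by
      intro y
      have : |h y| = (M+ε)⁻¹ * |g y| := by
        simp [hdef, abs_mul, abs_of_pos (inv_pos.mpr hc)]
      rw [this, inv_mul_le_iff₀ hc, mul_one]
      linarith [hgM y]
    have hle : |ν h| ≤ N :=
      le_csSup (measNorm_bddAbove hν) ⟨h, hhub, hh1, rfl⟩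
    have hgeq : g = (M + ε) • h := by
      rw [hdef, smul_smul, mul_inv_cancel₀ (ne_of_gt hc), one_smul]
    have : ν g = (M + ε) * ν h := by
      rw [hgeq]; exact hν.2.1 _ _ hhub
    rw [this, abs_mul, abs_of_pos hc]
    exact mul_le_mul_of_nonneg_left hle (le_of_lt hc)
  have : |ν g| ≤ M * N := by
    refine le_of_forall_pos_le_add fun ε hε => ?_
    have h1 := key (ε / (N + 1)) (by positivity)
    have h2 : (M + ε / (N + 1)) * N ≤ M * N + ε := by
      have : ε / (N + 1) * N ≤ ε := by
        rw [div_mul_eq_mul_div, div_le_iff₀ (by linarith)]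
        nlinarith
      nlinarith
    linarith
  linarith [this, mul_comm M N]

theorem stmt1 {X Y : Type*} [UniformSpace X] [UniformSpace Y]
    (F : Set (X × Y → ℝ)) (B : Set ((Y → ℝ) → ℝ)) (s : ℝ)
    (hFbdd : ∀ f ∈ F, ∃ C : ℝ, ∀ p, |f p| ≤ C)
    (hSU1 : UniformEquicontinuous
      (fun q : F × Y => fun x : X => q.1.1 (x, q.2)))
    (hSU2 : ∀ x : X, UniformEquicontinuous
      (fun f : F => fun y : Y => f.1 (x, y)))
    (hBmeas : ∀ ν ∈ B, IsMeas ν)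
    (hBs : ∀ ν ∈ B, measNorm ν ≤ s) :
    (∀ f ∈ F, ∀ ν ∈ B,
        supNorm (fun x => ν fun y => f (x, y)) ≤ s * supNorm f) ∧
      UniformEquicontinuous
        (fun q : F × B => fun x : X => q.2.1 fun y => q.1.1 (x, y)) := by
  -- sections are Ub
  have hsecUC : ∀ (f : F) (x : X), UniformContinuous fun y => f.1 (x, y) :=
    fun f x => (hSU2 x).uniformContinuous f
  have hsecUb : ∀ (f : F) (x : X), IsUb fun y => f.1 (x, y) := by
    intro f x
    obtain ⟨C, hC⟩ := hFbdd f.1 f.2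
    exact ⟨hsecUC f x, C, fun y => hC (x, y)⟩
  have hbound : ∀ f ∈ F, ∀ ν ∈ B,
      supNorm (fun x => ν fun y => f (x, y)) ≤ s * supNorm f := by
    intro f hf ν hν
    obtain ⟨C, hC⟩ := hFbdd f hf
    have hs0 : 0 ≤ s := le_trans (measNorm_nonneg (hBmeas ν hν)) (hBs ν hν)
    have hsf : 0 ≤ s * supNorm f := mul_nonneg hs0 (supNorm_nonneg f)
    refine supNorm_le hsf fun x => ?_
    have h1 : |ν fun y => f (x, y)| ≤ measNorm ν * supNorm (fun y => f (x, y)) :=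
      meas_abs_le (hBmeas ν hν) (hsecUb ⟨f, hf⟩ x)
    have h2 : supNorm (fun y => f (x, y)) ≤ supNorm f := by
      refine supNorm_le (supNorm_nonneg f) fun y => le_supNorm hC (x, y)
    calc |ν fun y => f (x, y)| ≤ measNorm ν * supNorm (fun y => f (x, y)) := h1
      _ ≤ s * supNorm f := by
          have := measNorm_nonneg (hBmeas ν hν)
          have := supNorm_nonneg (fun y => f (x, y))
          exact mul_le_mul (hBs ν hν) h2 (by assumption) hs0
  refine ⟨hbound, ?_⟩
  rw [Metric.uniformEquicontinuous_iff_right]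
  intro ε hε
  rcases B.eq_empty_or_nonempty with rfl | ⟨ν₀, hν₀⟩
  · filter_upwards [univ_mem] with xy _ q
    exact absurd q.2.2 (Set.notMem_empty _)
  have hs0 : 0 ≤ s := le_trans (measNorm_nonneg (hBmeas ν₀ hν₀)) (hBs ν₀ hν₀)
  have hδ : (0:ℝ) < ε / (2 * (s + 1)) := by positivity
  have hev := Metric.uniformEquicontinuous_iff_right.mp hSU1 _ hδ
  filter_upwards [hev] with xy h q
  obtain ⟨f, ν⟩ := q
  set g : Y → ℝ := (fun y => f.1 (xy.1, y)) - (fun y => f.1 (xy.2, y)) with hg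
  have hg1 := hsecUb f xy.1
  have hg2 := hsecUb f xy.2
  obtain ⟨C₁, hC₁⟩ := hg1.2
  obtain ⟨C₂, hC₂⟩ := hg2.2
  have hgub : IsUb g := by
    refine ⟨hg1.1.sub hg2.1, C₁ + C₂, fun y => ?_⟩
    simp only [hg, Pi.sub_apply]
    exact (abs_sub _ _).trans (add_le_add (hC₁ y) (hC₂ y))
  have hνm := hBmeas ν.1 ν.2
  have hdiff : ν.1 (fun y => f.1 (xy.1, y)) - ν.1 (fun y => f.1 (xy.2, y)) = ν.1 g := by
    have hadd := hνm.1 g (fun y => f.1 (xy.2, y)) hgub hg2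
    have : g + (fun y => f.1 (xy.2, y)) = fun y => f.1 (xy.1, y) := by
      funext y; simp [hg]
    rw [this] at hadd
    linarith
  have hgsmall : supNorm g ≤ ε / (2 * (s + 1)) := by
    refine supNorm_le (le_of_lt hδ) fun y => le_of_lt ?_
    have := h (f, y)
    simp only [Real.dist_eq] at this
    simpa [hg] using this
  have hbd : |ν.1 g| ≤ measNorm ν.1 * supNorm g := meas_abs_le hνm hgub
  have : |ν.1 g| ≤ s * (ε / (2 * (s + 1))) := by
    calc |ν.1 g| ≤ measNorm ν.1 * supNorm g := hbd
      _ ≤ s * (ε / (2 * (s + 1))) :=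
        mul_le_mul (hBs ν.1 ν.2) hgsmall (supNorm_nonneg g) hs0
  have hfin : s * (ε / (2 * (s + 1))) < ε := by
    rw [mul_div_assoc']
    rw [div_lt_iff₀ (by linarith)]
    nlinarith
  rw [Real.dist_eq, hdiff]
  linarith
end
end

section
/- Let X and Y be uniform spaces, μ ∈ Meas(X), ν ∈ Meas(Y). If μ and ν are positive, then (μ ⊗ ν)(f) ≥ 0 for every semiuniform f : X × Y → ℝ with f(x,y) ≥ 0 for all (x,y) ∈ X × Y. -/
noncomputable section

open Filter Topology

theorem stmt3 {X Y : Type*} [UniformSpace X] [UniformSpace Y]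
    (μ : (X → ℝ) → ℝ) (ν : (Y → ℝ) → ℝ)
    (hμ : IsMeas μ) (hν : IsMeas ν)
    (hμpos : IsPositive μ) (hνpos : IsPositive ν)
    (f : X × Y → ℝ) (hf : Semiuniform f) (hfpos : ∀ p, 0 ≤ f p) :
    0 ≤ dirProd μ ν f := by
  obtain ⟨⟨C0, hC0⟩, hequi, hsec⟩ := hf
  obtain ⟨hνadd, hνsmul, Cν0, hCν0⟩ := hν
  set Cν : ℝ := max Cν0 0 with hCνdef
  have hCνnn : 0 ≤ Cν := le_max_right _ _
  have hCν : ∀ h : Y → ℝ, IsUb h → (∀ y, |h y| ≤ 1) → |ν h| ≤ Cν :=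
    fun h h1 h2 => (hCν0 h h1 h2).trans (le_max_left _ _)
  -- IsUb closure lemmas
  have hsmul : ∀ (c : ℝ) (h : Y → ℝ), IsUb h → IsUb (c • h) := by
    intro c h ⟨h1, C, hC⟩
    refine ⟨h1.const_smul c, |c| * C, fun y => ?_⟩
    simp only [Pi.smul_apply, smul_eq_mul, abs_mul]
    exact mul_le_mul_of_nonneg_left (hC y) (abs_nonneg c)
  have hadd : ∀ (h g : Y → ℝ), IsUb h → IsUb g → IsUb (h + g) := by
    intro h g ⟨h1, C, hC⟩ ⟨g1, D, hD⟩
    refine ⟨h1.add g1, C + D, fun y => ?_⟩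
    exact (abs_add_le _ _).trans (add_le_add (hC y) (hD y))
  -- scaling bound
  have hbound : ∀ (h : Y → ℝ), IsUb h → ∀ B : ℝ, 0 < B → (∀ y, |h y| ≤ B) →
      |ν h| ≤ Cν * B := by
    intro h hh B hB hhB
    have h1 : IsUb (B⁻¹ • h) := hsmul _ _ hh
    have h2 : ∀ y, |(B⁻¹ • h) y| ≤ 1 := by
      intro y
      simp only [Pi.smul_apply, smul_eq_mul, abs_mul, abs_inv, abs_of_pos hB]
      rw [inv_mul_le_iff₀ hB, mul_one]
      exact hhB y
    have h3 : h = B • (B⁻¹ • h) := by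
      rw [smul_smul, mul_inv_cancel₀ hB.ne', one_smul]
    calc |ν h| = |B * ν (B⁻¹ • h)| := by conv_lhs => rw [h3, hνsmul _ _ h1]
      _ = B * |ν (B⁻¹ • h)| := by rw [abs_mul, abs_of_pos hB]
      _ ≤ B * Cν := mul_le_mul_of_nonneg_left (hCν _ h1 h2) hB.le
      _ = Cν * B := mul_comm _ _
  -- subtraction
  have hsub : ∀ h g : Y → ℝ, IsUb h → IsUb g → ν h - ν g = ν (h - g) := by
    intro h g hh hg
    have : h - g = h + (-1 : ℝ) • g := by ext y; simp [sub_eq_add_neg]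
    rw [this, hνadd _ _ hh (hsmul _ _ hg), hνsmul _ _ hg]
    ring
  -- sections are Ub
  have hsecUb : ∀ x, IsUb (fun y => f (x, y)) :=
    fun x => ⟨hsec x, C0, fun y => hC0 _⟩
  set g : X → ℝ := fun x => ν (fun y => f (x, y)) with hg
  -- g is Ub
  have hgUb : IsUb g := by
    constructor
    · rw [UniformContinuous]
      rw [Metric.uniformity_basis_dist.tendsto_right_iff]
      intro ε hε
      set δ : ℝ := ε / (Cν + 1) with hδdef
      have hδ : 0 < δ := div_pos hε (by linarith)
      have hV : {z : ℝ × ℝ | dist z.1 z.2 < δ} ∈ uniformity ℝ :=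
        Metric.dist_mem_uniformity hδ
      filter_upwards [hequi _ hV] with p hp
      have hdiffUb : IsUb ((fun y => f (p.1, y)) - fun y => f (p.2, y)) := by
        have : ((fun y => f (p.1, y)) - fun y => f (p.2, y))
            = (fun y => f (p.1, y)) + (-1 : ℝ) • (fun y => f (p.2, y)) := by
          ext y; simp [sub_eq_add_neg]
        rw [this]
        exact hadd _ _ (hsecUb _) (hsmul _ _ (hsecUb _))
      have hbd : ∀ y, |((fun y => f (p.1, y)) - fun y => f (p.2, y)) y| ≤ δ := by
        intro y
        have := hp y
        rw [Real.dist_eq] at this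
        simpa using this.le
      have : |g p.1 - g p.2| ≤ Cν * δ := by
        show |ν (fun y => f (p.1, y)) - ν (fun y => f (p.2, y))| ≤ Cν * δ
        rw [hsub _ _ (hsecUb _) (hsecUb _)]
        exact hbound _ hdiffUb δ hδ hbd
      show dist (g p.1) (g p.2) < ε
      rw [Real.dist_eq]
      calc |g p.1 - g p.2| ≤ Cν * δ := this
        _ < (Cν + 1) * δ := by nlinarith
        _ = ε := by rw [hδdef]; field_simp
    · refine ⟨Cν * (|C0| + 1), fun x => ?_⟩
      refine hbound _ (hsecUb x) _ (by positivity) fun y => ?_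
      calc |f (x, y)| ≤ C0 := hC0 _
        _ ≤ |C0| := le_abs_self _
        _ ≤ |C0| + 1 := by linarith
  -- conclude
  have hgpos : ∀ x, 0 ≤ g x :=
    fun x => hνpos _ (hsecUb x) (fun y => hfpos _)
  exact hμpos g hgUb hgpos
end
end

section
/- Let X and Y be uniform spaces, let B ⊆ Meas(Y) be bounded in the dual norm, let μ₀ ∈ Meas(X) be a uniform measure and ν₀ ∈ B. Let F be a set of semiuniform functions f : X × Y → ℝ with sup_{f∈F}‖f‖ < ∞, such that the family {x ↦ f(x,y) : f ∈ F, y ∈ Y} is uniformly equicontinuous on X and for each x ∈ X the family {y ↦ f(x,y) : f ∈ F} is uniformly equicontinuous on Y. Then for every ε > 0 there exist ‖·‖-bounded uniformly equicontinuous sets H₁ ⊆ Ub(X) and H₂ ⊆ Ub(Y) and δ > 0 such that for all μ ∈ Meas(X) and ν ∈ B satisfying sup_{h∈H₁}|μ(h) − μ₀(h)| < δ and sup_{h∈H₂}|ν(h) − ν₀(h)| < δ, one has sup_{f∈F}|(μ ⊗ ν)(f) − (μ₀ ⊗ ν₀)(f)| < ε. (That is, (μ,ν) ↦ μ ⊗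 ν is jointly continuous at (μ₀,ν₀) for the UEB topologies.) -/
noncomputable section

open Filter Topology

open scoped Uniformity

section AuxStmt4

variable {Z : Type*} [UniformSpace Z]

lemma isUb_zero' : IsUb (fun _ : Z => (0 : ℝ)) :=
  ⟨uniformContinuous_const, 0, by simp⟩

lemma isUb_smul' (c : ℝ) {f : Z → ℝ} (hf : IsUb f) : IsUb (c • f) := by
  obtain ⟨hfc, C, hC⟩ := hf
  refine ⟨hfc.const_smul c, |c| * C, fun x => ?_⟩
  have : |c • f x| = |c| * |f x| := by simp [abs_mul]
  simp only [Pi.smul_apply]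
  rw [this]
  exact mul_le_mul_of_nonneg_left (hC x) (abs_nonneg c)

lemma isUb_sub' {f g : Z → ℝ} (hf : IsUb f) (hg : IsUb g) :
    IsUb (fun x => f x - g x) := by
  obtain ⟨hfc, Cf, hCf⟩ := hf
  obtain ⟨hgc, Cg, hCg⟩ := hg
  exact ⟨hfc.sub hgc, Cf + Cg, fun x =>
    (abs_sub (f x) (g x)).trans (add_le_add (hCf x) (hCg x))⟩

lemma meas_zero' {μ : (Z → ℝ) → ℝ} (hμ : IsMeas μ) : μ (fun _ : Z => (0 : ℝ)) = 0 := by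
  have h := hμ.2.1 0 (fun _ : Z => (0 : ℝ)) isUb_zero'
  have e : ((0 : ℝ) • fun _ : Z => (0 : ℝ)) = fun _ : Z => (0 : ℝ) := by
    funext x; simp
  rw [e] at h
  simpa using h

lemma meas_sub' {μ : (Z → ℝ) → ℝ} (hμ : IsMeas μ) {f g : Z → ℝ}
    (hf : IsUb f) (hg : IsUb g) :
    μ (fun x => f x - g x) = μ f - μ g := by
  have h1 : IsUb ((-1 : ℝ) • g) := isUb_smul' _ hg
  have e : (fun x => f x - g x) = f + (-1 : ℝ) • g := by
    funext x
    show f x - g x = f x + (-1 : ℝ) • g x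
    simp [sub_eq_add_neg]
  rw [e, hμ.1 f ((-1 : ℝ) • g) hf h1, hμ.2.1 (-1) g hg]
  ring

lemma meas_apply_bound' {μ : (Z → ℝ) → ℝ} (hμ : IsMeas μ) {s : ℝ} (hs : measNorm μ ≤ s)
    {g : Z → ℝ} (hg : IsUb g) {c : ℝ} (hc0 : 0 ≤ c) (hc : ∀ x, |g x| ≤ c) :
    |μ g| ≤ s * c := by
  obtain ⟨C₃, hC₃⟩ := hμ.2.2
  have hbdd : BddAbove {r : ℝ | ∃ f : Z → ℝ, IsUb f ∧ (∀ x, |f x| ≤ 1) ∧ r = |μ f|} := by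
    refine ⟨C₃, ?_⟩
    rintro r ⟨f, hf, h1, rfl⟩
    exact hC₃ f hf h1
  rcases eq_or_lt_of_le hc0 with h | h
  · have hg0 : g = fun _ : Z => (0 : ℝ) := by
      funext x
      have := hc x
      rw [← h] at this
      exact abs_nonpos_iff.1 this
    rw [hg0, meas_zero' hμ, ← h]
    simp
  · set g' : Z → ℝ := c⁻¹ • g with hg'def
    have hg' : IsUb g' := isUb_smul' _ hg
    have h1 : ∀ x, |g' x| ≤ 1 := by
      intro x
      have : |g' x| = c⁻¹ * |g x| := by
        simp [hg'def, abs_mul, abs_of_pos (inv_pos.2 h)]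
      rw [this]
      rw [inv_mul_le_iff₀ h, mul_one]
      exact hc x
    have hmem : |μ g'| ∈ {r : ℝ | ∃ f : Z → ℝ, IsUb f ∧ (∀ x, |f x| ≤ 1) ∧ r = |μ f|} :=
      ⟨g', hg', h1, rfl⟩
    have hle : |μ g'| ≤ s := (le_csSup hbdd hmem).trans hs
    have he : c • g' = g := by
      funext x
      show c • (c⁻¹ • g x) = g x
      rw [smul_smul, mul_inv_cancel₀ h.ne', one_smul]
    have : μ g = c * μ g' := by rw [← he, hμ.2.1 c g' hg']
    rw [this, abs_mul, abs_of_pos h]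
    calc c * |μ g'| ≤ c * s := mul_le_mul_of_nonneg_left hle h.le
      _ = s * c := mul_comm _ _

lemma uec_real_iff' {ι : Type*} {F : ι → Z → ℝ} :
    UniformEquicontinuous F ↔
      ∀ ε : ℝ, 0 < ε → ∃ U ∈ 𝓤 Z, ∀ p : Z × Z, p ∈ U → ∀ i, |F i p.1 - F i p.2| < ε := by
  constructor
  · intro h ε hε
    have h2 := h {p : ℝ × ℝ | dist p.1 p.2 < ε} (Metric.dist_mem_uniformity hε)
    rw [Filter.eventually_iff_exists_mem] at h2
    obtain ⟨U, hU, hUP⟩ := h2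
    exact ⟨U, hU, fun p hp i => by simpa [Real.dist_eq] using hUP p hp i⟩
  · intro h V hV
    obtain ⟨ε, hε, hball⟩ := Metric.mem_uniformity_dist.1 hV
    obtain ⟨U, hU, hUP⟩ := h ε hε
    rw [Filter.eventually_iff_exists_mem]
    exact ⟨U, hU, fun p hp i => hball (by simpa [Real.dist_eq] using hUP p hp i)⟩

end AuxStmt4

theorem stmt4 {X Y : Type*} [UniformSpace X] [UniformSpace Y]
    (B : Set ((Y → ℝ) → ℝ)) (hBmeas : ∀ ν ∈ B, IsMeas ν)
    (hBbdd : ∃ s : ℝ, ∀ ν ∈ B, measNorm ν ≤ s)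
    (μ₀ : (X → ℝ) → ℝ) (hμ₀ : IsMeas μ₀) (hμ₀u : IsUniformMeasure μ₀)
    (ν₀ : (Y → ℝ) → ℝ) (hν₀ : ν₀ ∈ B)
    (F : Set (X × Y → ℝ)) (hF : ∀ f ∈ F, Semiuniform f)
    (C : ℝ) (hFC : ∀ f ∈ F, ∀ p, |f p| ≤ C)
    (hSU1 : UniformEquicontinuous
      (fun q : F × Y => fun x : X => q.1.1 (x, q.2)))
    (hSU2 : ∀ x : X, UniformEquicontinuous
      (fun f : F => fun y : Y => f.1 (x, y)))
    (ε : ℝ) (hε : 0 < ε) :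
    ∃ (H₁ : Set (X → ℝ)) (H₂ : Set (Y → ℝ)) (δ : ℝ),
      (∃ C₁ : ℝ, ∀ h ∈ H₁, ∀ x, |h x| ≤ C₁) ∧ H₁.UniformEquicontinuous ∧
      (∃ C₂ : ℝ, ∀ h ∈ H₂, ∀ y, |h y| ≤ C₂) ∧ H₂.UniformEquicontinuous ∧
      0 < δ ∧
      ∀ μ : (X → ℝ) → ℝ, IsMeas μ → ∀ ν ∈ B,
        (∀ h ∈ H₁, |μ h - μ₀ h| < δ) → (∀ h ∈ H₂, |ν h - ν₀ h| < δ) →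
        ∀ f ∈ F, |dirProd μ ν f - dirProd μ₀ ν₀ f| < ε := by
  classical
  obtain ⟨s, hs⟩ := hBbdd
  set t : ℝ := max s 0 with ht_def
  have ht0 : 0 ≤ t := le_max_right _ _
  have htB : ∀ ν ∈ B, measNorm ν ≤ t := fun ν hν => (hs ν hν).trans (le_max_left _ _)
  set C' : ℝ := |C| with hC'_def
  have hC'0 : 0 ≤ C' := abs_nonneg C
  have hC' : ∀ f ∈ F, ∀ p, |f p| ≤ C' := fun f hf p => (hFC f hf p).trans (le_abs_self C)
  -- sections are Ub
  have secUb : ∀ f ∈ F, ∀ x : X, IsUb (fun y => f (x, y)) := fun f hf x =>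
    ⟨(hF f hf).2.2 x, C', fun y => hC' f hf (x, y)⟩
  -- key estimate: entourage control of x ↦ ν (f (x, ·))
  have lemA : ∀ η : ℝ, 0 < η → ∃ U ∈ 𝓤 X, ∀ p : X × X, p ∈ U →
      ∀ ν ∈ B, ∀ f ∈ F,
        |ν (fun y => f (p.1, y)) - ν (fun y => f (p.2, y))| ≤ t * η := by
    intro η hη
    obtain ⟨U, hU, hUP⟩ := uec_real_iff'.1 hSU1 η hη
    refine ⟨U, hU, fun p hp ν hν f hf => ?_⟩
    have hd : IsUb (fun y => f (p.1, y) - f (p.2, y)) :=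
      isUb_sub' (secUb f hf p.1) (secUb f hf p.2)
    have hdb : ∀ y, |f (p.1, y) - f (p.2, y)| ≤ η := fun y =>
      (hUP p hp (⟨⟨f, hf⟩, y⟩ : F × Y)).le
    have hlin := meas_sub' (hBmeas ν hν) (secUb f hf p.1) (secUb f hf p.2)
    rw [← hlin]
    exact meas_apply_bound' (hBmeas ν hν) (htB ν hν) hd hη.le hdb
  -- the set H₁
  set H₁ : Set (X → ℝ) :=
    {g | ∃ ν ∈ B, ∃ f ∈ F, g = fun x => ν fun y => f (x, y)} with hH₁_def
  have hH1bdd : ∀ h ∈ H₁, ∀ x, |h x| ≤ t * C' := by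
    rintro h ⟨ν, hν, f, hf, rfl⟩ x
    exact meas_apply_bound' (hBmeas ν hν) (htB ν hν) (secUb f hf x) hC'0
      (fun y => hC' f hf (x, y))
  have hH1ec : H₁.UniformEquicontinuous := by
    refine uec_real_iff'.2 ?_
    intro ε' hε'
    obtain ⟨U, hU, hUP⟩ := lemA (ε' / (t + 1)) (by positivity)
    refine ⟨U, hU, ?_⟩
    rintro p hp ⟨h, ν, hν, f, hf, rfl⟩
    have h1 := hUP p hp ν hν f hf
    have h2 : t * (ε' / (t + 1)) < ε' := by
      rw [mul_div_assoc', div_lt_iff₀ (by positivity)]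
      nlinarith
    calc |(fun x => ν fun y => f (x, y)) p.1 - (fun x => ν fun y => f (x, y)) p.2|
        ≤ t * (ε' / (t + 1)) := h1
      _ < ε' := h2
  have gUC : ∀ ν ∈ B, ∀ f ∈ F, UniformContinuous (fun x => ν fun y => f (x, y)) :=
    fun ν hν f hf => hH1ec.uniformContinuous_of_mem ⟨ν, hν, f, hf, rfl⟩
  have gUb : ∀ ν ∈ B, ∀ f ∈ F, IsUb (fun x => ν fun y => f (x, y)) :=
    fun ν hν f hf => ⟨gUC ν hν f hf, t * C',
      fun x => hH1bdd _ ⟨ν, hν, f, hf, rfl⟩ x⟩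
  -- the set H for the uniform-measure property of μ₀
  set D : Set (X → ℝ) :=
    {h | ∃ ν ∈ B, ∃ f ∈ F,
      h = fun x => ν (fun y => f (x, y)) - ν₀ (fun y => f (x, y))} with hD_def
  set H : Set (X → ℝ) := insert (fun _ : X => (0 : ℝ)) D with hH_def
  have hHbdd : ∀ h ∈ H, ∀ x, |h x| ≤ t * C' + t * C' := by
    rintro h (rfl | ⟨ν, hν, f, hf, rfl⟩) x
    · simp; positivity
    · calc |ν (fun y => f (x, y)) - ν₀ (fun y => f (x, y))|
          ≤ |ν fun y => f (x, y)| + |ν₀ fun y => f (x, y)| := abs_sub _ _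
        _ ≤ t * C' + t * C' := add_le_add
            (meas_apply_bound' (hBmeas ν hν) (htB ν hν) (secUb f hf x) hC'0
              (fun y => hC' f hf (x, y)))
            (meas_apply_bound' (hBmeas ν₀ hν₀) (htB ν₀ hν₀) (secUb f hf x) hC'0
              (fun y => hC' f hf (x, y)))
  have hHec : H.UniformEquicontinuous := by
    refine uec_real_iff'.2 ?_
    intro ε' hε'
    obtain ⟨U, hU, hUP⟩ := lemA (ε' / (2 * t + 2)) (by positivity)
    refine ⟨U, hU, ?_⟩
    rintro p hp ⟨h, (rfl | ⟨ν, hν, f, hf, rfl⟩)⟩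
    · simpa using hε'
    · have h1 := hUP p hp ν hν f hf
      have h2 := hUP p hp ν₀ hν₀ f hf
      have h3 : t * (ε' / (2 * t + 2)) + t * (ε' / (2 * t + 2)) < ε' := by
        rw [← two_mul, mul_div_assoc', mul_div_assoc', div_lt_iff₀ (by positivity)]
        nlinarith
      have key : |(ν (fun y => f (p.1, y)) - ν₀ (fun y => f (p.1, y))) -
          (ν (fun y => f (p.2, y)) - ν₀ (fun y => f (p.2, y)))| ≤
          t * (ε' / (2 * t + 2)) + t * (ε' / (2 * t + 2)) := by
        have e : (ν (fun y => f (p.1, y)) - ν₀ (fun y => f (p.1, y))) -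
            (ν (fun y => f (p.2, y)) - ν₀ (fun y => f (p.2, y))) =
            (ν (fun y => f (p.1, y)) - ν (fun y => f (p.2, y))) -
            (ν₀ (fun y => f (p.1, y)) - ν₀ (fun y => f (p.2, y))) := by ring
        rw [e]
        exact (abs_sub _ _).trans (add_le_add h1 h2)
      exact lt_of_le_of_lt key h3
  have h0H : (fun _ : X => (0 : ℝ)) ∈ H := Set.mem_insert _ _
  obtain ⟨K, δ', hδ', hKey⟩ := hμ₀u H ⟨t * C' + t * C', hHbdd⟩ hHec
    (fun _ : X => (0 : ℝ)) h0H (ε / 2) (half_pos hε)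
  -- the set H₂
  set H₂ : Set (Y → ℝ) := {h | ∃ f ∈ F, ∃ x ∈ K, h = fun y => f (x, y)} with hH₂_def
  have hH2bdd : ∀ h ∈ H₂, ∀ y, |h y| ≤ C' := by
    rintro h ⟨f, hf, x, hxK, rfl⟩ y
    exact hC' f hf (x, y)
  have hH2ec : H₂.UniformEquicontinuous := by
    refine uec_real_iff'.2 ?_
    intro ε' hε'
    choose U hU hUP using fun x : X => uec_real_iff'.1 (hSU2 x) ε' hε'
    refine ⟨⋂ x ∈ K, U x, (Filter.biInter_finset_mem _).2 fun x _ => hU x, ?_⟩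
    rintro p hp ⟨h, f, hf, x, hxK, rfl⟩
    have hpx : p ∈ U x := by
      have := Set.mem_iInter₂.1 hp x hxK
      exact this
    simpa using hUP x p hpx ⟨f, hf⟩
  -- choose δ
  refine ⟨H₁, H₂, min δ' (ε / 2), ⟨t * C', hH1bdd⟩, hH1ec, ⟨C', hH2bdd⟩, hH2ec,
    lt_min hδ' (half_pos hε), ?_⟩
  intro μ hμ ν hν h1 h2 f hf
  set gν : X → ℝ := fun x => ν fun y => f (x, y) with hgν_def
  set gν₀ : X → ℝ := fun x => ν₀ fun y => f (x, y) with hgν₀_def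
  have step1 : |μ gν - μ₀ gν| < min δ' (ε / 2) := h1 gν ⟨ν, hν, f, hf, rfl⟩
  have hmemH : (fun x => gν x - gν₀ x) ∈ H :=
    Set.mem_insert_of_mem _ ⟨ν, hν, f, hf, rfl⟩
  have step2 : ∀ x ∈ K, |(fun x => gν x - gν₀ x) x - (fun _ : X => (0 : ℝ)) x| < δ' := by
    intro x hxK
    have hsec : (fun y => f (x, y)) ∈ H₂ := ⟨f, hf, x, hxK, rfl⟩
    have := h2 _ hsec
    calc |(fun x => gν x - gν₀ x) x - (fun _ : X => (0 : ℝ)) x|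
        = |ν (fun y => f (x, y)) - ν₀ (fun y => f (x, y))| := by simp [hgν_def, hgν₀_def]
      _ < min δ' (ε / 2) := this
      _ ≤ δ' := min_le_left _ _
  have step3 : |μ₀ (fun x => gν x - gν₀ x) - μ₀ (fun _ : X => (0 : ℝ))| < ε / 2 :=
    hKey _ hmemH step2
  rw [meas_zero' hμ₀, sub_zero] at step3
  have step4 : μ₀ (fun x => gν x - gν₀ x) = μ₀ gν - μ₀ gν₀ :=
    meas_sub' hμ₀ (gUb ν hν f hf) (gUb ν₀ hν₀ f hf)
  rw [step4] at step3
  have hfinal : |μ gν - μ₀ gν₀| < ε := by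
    have htri : |μ gν - μ₀ gν₀| ≤ |μ gν - μ₀ gν| + |μ₀ gν - μ₀ gν₀| :=
      abs_sub_le _ _ _
    have hmin : min δ' (ε / 2) ≤ ε / 2 := min_le_right _ _
    linarith
  simpa [dirProd, hgν_def, hgν₀_def] using hfinal
end
end

section
/- (Fubini's theorem for uniform measures.) Let X and Y be uniform spaces, let μ ∈ Meas(X) be a uniform measure, let ν ∈ Meas(Y), and let f : X × Y → ℝ be semiuniform. Then the function y ↦ μ(x ↦ f(x,y)) belongs to Ub(Y) (each section x ↦ f(x,y) lies in Ub(X)), and μ(x ↦ ν(y ↦ f(x,y))) = ν(y ↦ μ(x ↦ f(x,y))). -/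
noncomputable section

open Filter Topology

/-! Integrating the sections against the two-point functionals `δ_y - δ_y'`, which
form a bounded uniformly equicontinuous family, and using the pointwise continuity of `μ` on that
family shows that `y ↦ μ (f (·, y))` is uniformly continuous. For the equality, the functionals of
norm at most `‖ν‖` turn the sections into a bounded uniformly equicontinuous family of functions on
`X`, which contains `x ↦ ν (f (x, ·))`. By Hahn–Banach, on finitely many test functions `ν` is
approximated by a finite combination of Dirac measures of no larger norm, and Fubini is trivial
for such combinations; continuity of `μ` on the family then gives the equality up to any `ε`. -/

open scoped Pointwise Uniformity

/-- `‖μ‖ ≤ M` in the dual norm of `Ub(X)`. -/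
def MeasNormLE {X : Type*} [UniformSpace X] (μ : (X → ℝ) → ℝ) (M : ℝ) : Prop :=
  ∀ g : X → ℝ, IsUb g → ∀ s : ℝ, 0 ≤ s → (∀ x, |g x| ≤ s) → |μ g| ≤ M * s

/-- The molecular measure `∑ i, c i • δ_{y i}`. -/
def diracSum {κ Y : Type*} [Fintype κ] (c : κ → ℝ) (y : κ → Y) (h : Y → ℝ) : ℝ :=
  ∑ i, c i * h (y i)

section Algebra

variable {Z : Type*} [UniformSpace Z]

lemma isUb_zero_s7 : IsUb (0 : Z → ℝ) :=
  ⟨uniformContinuous_const, 0, fun _ => by simp⟩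

namespace IsUb

variable {g h : Z → ℝ}

lemma add (hg : IsUb g) (hh : IsUb h) : IsUb (g + h) := by
  obtain ⟨Cg, hCg⟩ := hg.2
  obtain ⟨Ch, hCh⟩ := hh.2
  exact ⟨hg.1.add hh.1, Cg + Ch, fun x => (abs_add_le _ _).trans (add_le_add (hCg x) (hCh x))⟩

lemma const_smul (hg : IsUb g) (c : ℝ) : IsUb (c • g) := by
  obtain ⟨C, hC⟩ := hg.2
  refine ⟨hg.1.const_smul c, |c| * C, fun x => ?_⟩
  rw [Pi.smul_apply, smul_eq_mul, abs_mul]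
  exact mul_le_mul_of_nonneg_left (hC x) (abs_nonneg c)

lemma sub (hg : IsUb g) (hh : IsUb h) : IsUb (g - h) := by
  simpa [sub_eq_add_neg] using hg.add (hh.const_smul (-1))

end IsUb

lemma isUb_sum {ι : Type*} (t : Finset ι) {g : ι → Z → ℝ} (hg : ∀ i ∈ t, IsUb (g i)) :
    IsUb (∑ i ∈ t, g i) := by
  classical
  induction t using Finset.induction with
  | empty => simpa using isUb_zero_s7
  | insert a s has ih =>
    rw [Finset.sum_insert has]
    exact (hg a (s.mem_insert_self a)).add (ih fun i hi => hg i (Finset.mem_insert_of_mem hi))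

namespace IsMeas

variable {μ : (Z → ℝ) → ℝ}

lemma map_zero (hμ : IsMeas μ) : μ 0 = 0 := by
  simpa using hμ.2.1 0 0 isUb_zero_s7

lemma map_sub (hμ : IsMeas μ) {g h : Z → ℝ} (hg : IsUb g) (hh : IsUb h) :
    μ (g - h) = μ g - μ h := by
  rw [sub_eq_add_neg, ← neg_one_smul ℝ h, hμ.1 _ _ hg (hh.const_smul _), hμ.2.1 _ _ hh]
  ring

lemma map_sum (hμ : IsMeas μ) {ι : Type*} (t : Finset ι) (c : ι → ℝ) {g : ι → Z → ℝ}
    (hg : ∀ i ∈ t, IsUb (g i)) : μ (∑ i ∈ t, c i • g i) = ∑ i ∈ t, c i * μ (g i) := by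
  classical
  induction t using Finset.induction with
  | empty => simpa using hμ.map_zero
  | insert a s has ih =>
    have hga := hg a (s.mem_insert_self a)
    have hgs : ∀ i ∈ s, IsUb (g i) := fun i hi => hg i (Finset.mem_insert_of_mem hi)
    rw [Finset.sum_insert has, Finset.sum_insert has,
      hμ.1 _ _ (hga.const_smul _) (isUb_sum s fun i hi => (hgs i hi).const_smul _),
      hμ.2.1 _ _ hga, ih hgs]

lemma exists_measNormLE (hμ : IsMeas μ) : ∃ M, 0 < M ∧ MeasNormLE μ M := by
  obtain ⟨C, hC⟩ := hμ.2.2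
  have hC0 : 0 ≤ C := (abs_nonneg _).trans (hC 0 isUb_zero_s7 fun _ => by simp)
  refine ⟨C + 1, by linarith, fun g hg s hs hgs => ?_⟩
  rcases hs.eq_or_lt with rfl | hs
  · have : g = 0 := funext fun x => abs_nonpos_iff.mp (hgs x)
    simp [this, hμ.map_zero]
  · have hsg : ∀ x, |(s⁻¹ • g) x| ≤ 1 := fun x => by
      rw [Pi.smul_apply, smul_eq_mul, abs_mul, abs_inv, abs_of_pos hs, inv_mul_le_iff₀ hs,
        mul_one]
      exact hgs x
    have := hC _ (hg.const_smul s⁻¹) hsg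
    rw [hμ.2.1 _ _ hg, abs_mul, abs_inv, abs_of_pos hs, inv_mul_le_iff₀ hs] at this
    nlinarith

lemma map_diracSum_comm {Y κ : Type*} [Fintype κ] (hμ : IsMeas μ) {f : Z × Y → ℝ}
    (hf : ∀ y, IsUb fun x => f (x, y)) (c : κ → ℝ) (y : κ → Y) :
    μ (fun x => diracSum c y fun y' => f (x, y')) =
      diracSum c y fun y' => μ fun x => f (x, y') := by
  have : (fun x => diracSum c y fun y' => f (x, y')) = ∑ i, c i • fun x => f (x, y i) := by
    funext x
    simp [diracSum, Finset.sum_apply]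
  rw [this, hμ.map_sum _ _ fun i _ => hf (y i)]
  rfl

end IsMeas

lemma MeasNormLE.mono {μ : (Z → ℝ) → ℝ} {M M' : ℝ} (hμ : MeasNormLE μ M) (hMM' : M ≤ M') :
    MeasNormLE μ M' :=
  fun g hg s hs hgs => (hμ g hg s hs hgs).trans (mul_le_mul_of_nonneg_right hMM' hs)

lemma isMeas_diracSum {κ : Type*} [Fintype κ] (c : κ → ℝ) (y : κ → Z) :
    IsMeas (diracSum c y) := by
  refine ⟨fun g h _ _ => ?_, fun a g _ => ?_, ∑ i, |c i|, fun g _ hg => ?_⟩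
  · simp [diracSum, mul_add, Finset.sum_add_distrib]
  · simp [diracSum, Finset.mul_sum, mul_left_comm]
  · calc |diracSum c y g| ≤ ∑ i, |c i * g (y i)| := Finset.abs_sum_le_sum_abs _ _
      _ ≤ ∑ i, |c i| := Finset.sum_le_sum fun i _ => by
        rw [abs_mul]
        exact mul_le_of_le_one_right (abs_nonneg _) (hg _)

lemma measNormLE_diracSum {κ : Type*} [Fintype κ] (c : κ → ℝ) (y : κ → Z) :
    MeasNormLE (diracSum c y) (∑ i, |c i|) := fun g _ s _ hgs =>
  calc |diracSum c y g| ≤ ∑ i, |c i * g (y i)| := Finset.abs_sum_le_sum_abs _ _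
    _ ≤ ∑ i, |c i| * s := Finset.sum_le_sum fun i _ => by
      rw [abs_mul]
      exact mul_le_mul_of_nonneg_left (hgs _) (abs_nonneg _)
    _ = (∑ i, |c i|) * s := (Finset.sum_mul _ _ _).symm

end Algebra

section Approximation

open Set

variable {Y : Type*} {M : ℝ}

lemma exists_diracSum_near_of_mem_closure {ι : Type*} [Fintype ι] {φ : ι → Y → ℝ} (hM : 0 ≤ M)
    {v : ι → ℝ}
    (hv : v ∈ closure (M • convexHull ℝ (range (fun y j => φ j y) ∪ -range (fun y j => φ j y))))
    {δ : ℝ} (hδ : 0 < δ) :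
    ∃ (κ : Type) (_ : Fintype κ) (c : κ → ℝ) (y : κ → Y),
      ∑ i, |c i| ≤ M ∧ ∀ j, |diracSum c y (φ j) - v j| < δ := by
  obtain ⟨_, ⟨q, hq, rfl⟩, hvq⟩ := Metric.mem_closure_iff.1 hv δ hδ
  obtain ⟨κ, _, w, z, hw0, hw1, hz, rfl⟩ := mem_convexHull_iff_exists_fintype.1 hq
  have : ∀ i, ∃ (σ : ℝ) (y : Y), |σ| = 1 ∧ z i = σ • fun j => φ j y := fun i => by
    rcases hz i with ⟨y, hy⟩ | ⟨y, hy⟩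
    · exact ⟨1, y, abs_one, by simp [hy]⟩
    · exact ⟨-1, y, by simp, by rw [← neg_neg (z i), ← hy]; simp⟩
  choose σ y hσ hzσ using this
  refine ⟨κ, inferInstance, fun i => M * w i * σ i, y, ?_, fun j => ?_⟩
  · simp [abs_mul, hσ, abs_of_nonneg hM, abs_of_nonneg (hw0 _), ← Finset.mul_sum, hw1]
  · have : diracSum (fun i => M * w i * σ i) y (φ j) = (M • ∑ i, w i • z i) j := by
      simp [diracSum, hzσ, Finset.sum_apply, Finset.mul_sum, mul_assoc]
    rw [this, abs_sub_comm, ← Real.dist_eq]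
    exact (dist_le_pi_dist _ _ j).trans_lt hvq

variable [UniformSpace Y] {ν : (Y → ℝ) → ℝ}

/-- Goldstine-type density of the molecular measures of norm `≤ M`, tested on finitely many
functions. -/
lemma IsMeas.mem_closure_smul_convexHull [Nonempty Y] (hν : IsMeas ν) (hM : 0 < M)
    (hνM : MeasNormLE ν M) {ι : Type*} [Fintype ι] {φ : ι → Y → ℝ} (hφ : ∀ j, IsUb (φ j)) :
    (fun j => ν (φ j)) ∈
      closure (M • convexHull ℝ (range (fun y j => φ j y) ∪ -range (fun y j => φ j y))) := by
  classical
  set T : Y → ι → ℝ := fun y j => φ j y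
  by_contra hv
  obtain ⟨L, u, hLS, huv⟩ :=
    geometric_hahn_banach_closed_point ((convex_convexHull ℝ _).smul M).closure isClosed_closure hv
  have hLA : ∀ z ∈ range T ∪ -range T, M * L z < u := fun z hz => by
    simpa using hLS _ (subset_closure (smul_mem_smul_set (subset_convexHull ℝ _ hz)))
  have hLT : ∀ y, M * |L (T y)| < u := fun y => by
    rcases abs_cases (L (T y)) with ⟨h, _⟩ | ⟨h, _⟩ <;> rw [h]
    · exact hLA _ (Or.inl ⟨y, rfl⟩)
    · simpa using hLA (-T y) (Or.inr (by simp))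
  have hu : 0 < u := (mul_nonneg hM.le (abs_nonneg _)).trans_lt (hLT (Classical.arbitrary Y))
  set a : ι → ℝ := fun j => L fun k => if j = k then 1 else 0
  have hL : ∀ w, L w = ∑ j, w j * a j := fun w => by
    simpa using LinearMap.pi_apply_eq_sum_univ L.toLinearMap w
  have hLφ : (fun y => L (T y)) = ∑ j, a j • φ j := by
    funext y
    simp [hL, T, Finset.sum_apply, mul_comm]
  have hνL : ν (fun y => L (T y)) = L fun j => ν (φ j) := by
    rw [hLφ, hν.map_sum _ _ fun j _ => hφ j, hL]
    simp [mul_comm]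
  have := hνM _ (hLφ ▸ isUb_sum _ fun j _ => (hφ j).const_smul (a j)) (u / M) (by positivity)
    fun y => (le_div_iff₀' hM).2 (hLT y).le
  rw [hνL, mul_div_cancel₀ _ hM.ne'] at this
  linarith [le_abs_self (L fun j => ν (φ j))]

lemma IsMeas.exists_diracSum_near (hν : IsMeas ν) (hM : 0 < M) (hνM : MeasNormLE ν M)
    (Φ : Finset (Y → ℝ)) (hΦ : ∀ φ ∈ Φ, IsUb φ) {δ : ℝ} (hδ : 0 < δ) :
    ∃ (κ : Type) (_ : Fintype κ) (c : κ → ℝ) (y : κ → Y),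
      ∑ i, |c i| ≤ M ∧ ∀ φ ∈ Φ, |diracSum c y φ - ν φ| < δ := by
  rcases isEmpty_or_nonempty Y with hY | hY
  · refine ⟨Empty, inferInstance, 0, isEmptyElim, by simp [hM.le], fun φ _ => ?_⟩
    simpa [diracSum, Subsingleton.elim φ 0, hν.map_zero] using hδ
  · obtain ⟨κ, _, c, y, hc, hcν⟩ := exists_diracSum_near_of_mem_closure hM.le
      (hν.mem_closure_smul_convexHull hM hνM fun φ : Φ => hΦ φ.1 φ.2) hδ
    exact ⟨κ, _, c, y, hc, fun φ hφ => hcν ⟨φ, hφ⟩⟩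

end Approximation

namespace Semiuniform

def sectionImages {X Y : Type*} [UniformSpace Y] (f : X × Y → ℝ) (M : ℝ) : Set (X → ℝ) :=
  {g | ∃ ρ : (Y → ℝ) → ℝ, IsMeas ρ ∧ MeasNormLE ρ M ∧ g = fun x => ρ fun y => f (x, y)}

lemma zero_mem_sectionImages {X Y : Type*} [UniformSpace Y] {f : X × Y → ℝ} {M : ℝ}
    (hM : 0 ≤ M) : (0 : X → ℝ) ∈ sectionImages f M :=
  ⟨0, ⟨fun _ _ _ _ => by simp, fun _ _ _ => by simp, 0, fun _ _ _ => by simp⟩,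
    fun _ _ _ hs _ => by simpa using mul_nonneg hM hs, rfl⟩

variable {X Y : Type*} [UniformSpace X] [UniformSpace Y] {f : X × Y → ℝ}

lemma exists_bound (hf : Semiuniform f) : ∃ D, 0 ≤ D ∧ ∀ p, |f p| ≤ D := by
  obtain ⟨C, hC⟩ := hf.1
  exact ⟨max C 0, le_max_right _ _, fun p => (hC p).trans (le_max_left _ _)⟩

lemma isUb_left (hf : Semiuniform f) (y : Y) : IsUb fun x => f (x, y) :=
  ⟨hf.2.1.uniformContinuous y, hf.1.imp fun _ hC _ => hC _⟩

lemma isUb_right (hf : Semiuniform f) (x : X) : IsUb fun y => f (x, y) :=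
  ⟨hf.2.2 x, hf.1.imp fun _ hC _ => hC _⟩

lemma bounded_sectionImages (hf : Semiuniform f) (M : ℝ) :
    ∃ C, ∀ g ∈ sectionImages f M, ∀ x, |g x| ≤ C := by
  obtain ⟨D, hD, hfD⟩ := hf.exists_bound
  refine ⟨M * D, ?_⟩
  rintro - ⟨ρ, -, hρM, rfl⟩ x
  exact hρM _ (hf.isUb_right x) D hD fun y => hfD _

lemma uniformEquicontinuous_sectionImages (hf : Semiuniform f) (M : ℝ) :
    (sectionImages f M).UniformEquicontinuous := by
  rw [Set.UniformEquicontinuous, Metric.uniformEquicontinuous_iff_right]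
  intro ε hε
  have hs : 0 < ε / (|M| + 1) := by positivity
  filter_upwards [Metric.uniformEquicontinuous_iff_right.1 hf.2.1 _ hs] with q hq
  rintro ⟨-, ρ, hρ, hρM, rfl⟩
  calc dist (ρ fun y => f (q.1, y)) (ρ fun y => f (q.2, y))
      = |ρ ((fun y => f (q.1, y)) - fun y => f (q.2, y))| := by
        rw [hρ.map_sub (hf.isUb_right _) (hf.isUb_right _), Real.dist_eq]
    _ ≤ M * (ε / (|M| + 1)) := hρM _ ((hf.isUb_right _).sub (hf.isUb_right _)) _ hs.le
        fun y => by simpa [← Real.dist_eq] using (hq y).le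
    _ < ε := by
        rw [mul_div_assoc', div_lt_iff₀ (by positivity)]
        nlinarith [le_abs_self M]

lemma uniformContinuous_map_left {μ : (X → ℝ) → ℝ} (hf : Semiuniform f) (hμ : IsMeas μ)
    (hμu : IsUniformMeasure μ) : UniformContinuous fun y => μ fun x => f (x, y) := by
  rw [UniformContinuous, Metric.uniformity_basis_dist.tendsto_right_iff]
  intro ε hε
  obtain ⟨K, δ, hδ, hK⟩ := hμu _ (hf.bounded_sectionImages 2)
    (hf.uniformEquicontinuous_sectionImages 2) 0 (zero_mem_sectionImages zero_le_two) ε hε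
  have hnear : ∀ᶠ q in 𝓤 Y, ∀ x ∈ K, dist (f (x, q.1)) (f (x, q.2)) < δ :=
    (eventually_all_finset K).2 fun x _ =>
      Metric.uniformity_basis_dist.tendsto_right_iff.1 (hf.2.2 x) δ hδ
  filter_upwards [hnear] with q hq
  -- integrate the sections against the two-point functional `δ_{q.1} - δ_{q.2}`
  have hc : ∑ i, |(![1, -1] : Fin 2 → ℝ) i| ≤ 2 := by norm_num [Fin.sum_univ_two]
  have := hK _ ⟨_, isMeas_diracSum ![1, -1] ![q.1, q.2],
    (measNormLE_diracSum _ _).mono hc, rfl⟩ fun x hx => by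
      simpa [diracSum, Fin.sum_univ_two, ← sub_eq_add_neg, ← Real.dist_eq] using hq x hx
  rw [hμ.map_diracSum_comm hf.isUb_left] at this
  simpa [diracSum, Fin.sum_univ_two, ← sub_eq_add_neg, hμ.map_zero, ← Real.dist_eq] using this

lemma isUb_map_left {μ : (X → ℝ) → ℝ} (hf : Semiuniform f) (hμ : IsMeas μ)
    (hμu : IsUniformMeasure μ) : IsUb fun y => μ fun x => f (x, y) := by
  obtain ⟨D, hD, hfD⟩ := hf.exists_bound
  obtain ⟨C, -, hμC⟩ := hμ.exists_measNormLE
  exact ⟨hf.uniformContinuous_map_left hμ hμu, C * D,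
    fun y => hμC _ (hf.isUb_left y) D hD fun x => hfD _⟩

lemma abs_map_right_sub_map_left_lt {μ : (X → ℝ) → ℝ} {ν : (Y → ℝ) → ℝ} (hf : Semiuniform f)
    (hμ : IsMeas μ) (hμu : IsUniformMeasure μ) (hν : IsMeas ν) {ε : ℝ} (hε : 0 < ε) :
    |(μ fun x => ν fun y => f (x, y)) - ν fun y => μ fun x => f (x, y)| < 2 * ε := by
  classical
  obtain ⟨M, hM, hνM⟩ := hν.exists_measNormLE
  obtain ⟨K, δ, hδ, hK⟩ := hμu _ (hf.bounded_sectionImages M)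
    (hf.uniformEquicontinuous_sectionImages M) _ ⟨ν, hν, hνM, rfl⟩ ε hε
  obtain ⟨κ, _, c, y, hcM, hc⟩ := hν.exists_diracSum_near hM hνM
    (insert (fun y => μ fun x => f (x, y)) (K.image fun x y => f (x, y)))
    (by simpa using ⟨hf.isUb_map_left hμ hμu, fun x _ => hf.isUb_right x⟩) (lt_min hδ hε)
  have hμρ := hK _ ⟨_, isMeas_diracSum c y, (measNormLE_diracSum c y).mono hcM, rfl⟩
    fun x hx => (hc _ (by simpa using Or.inr ⟨x, hx, rfl⟩)).trans_le (min_le_left _ _)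
  have hρν := (hc _ (Finset.mem_insert_self _ _)).trans_le (min_le_right _ _)
  rw [hμ.map_diracSum_comm hf.isUb_left] at hμρ
  rw [abs_sub_lt_iff] at hμρ hρν ⊢
  constructor <;> linarith

end Semiuniform

/-- Fubini's theorem for uniform measures. -/
theorem stmt7 {X Y : Type*} [UniformSpace X] [UniformSpace Y]
    (μ : (X → ℝ) → ℝ) (hμ : IsMeas μ) (hμu : IsUniformMeasure μ)
    (ν : (Y → ℝ) → ℝ) (hν : IsMeas ν)
    (f : X × Y → ℝ) (hf : Semiuniform f) :
    IsUb (fun y => μ fun x => f (x, y)) ∧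
      μ (fun x => ν fun y => f (x, y)) = ν fun y => μ fun x => f (x, y) := by
  refine ⟨hf.isUb_map_left hμ hμu, eq_of_forall_dist_le fun ε hε => ?_⟩
  have := hf.abs_map_right_sub_map_left_lt hμ hμu hν (half_pos hε)
  rw [Real.dist_eq]
  linarith
end
end

section
/- Let X be a uniform space and μ ∈ Meas(X). Then μ is a uniform measure if and only if for every uniform space Y and every semiuniform f : X × Y → ℝ, the function y ↦ μ(x ↦ f(x,y)) is continuous on Y. (This is the statement that y ↦ μ ⊗ δ_y is weak-* continuous, where δ_y is the Dirac measure at y.) -/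
noncomputable section

open Filter Topology

universe u

theorem stmt9 {X : Type u} [UniformSpace X] (μ : (X → ℝ) → ℝ) (hμ : IsMeas μ) :
    IsUniformMeasure μ ↔
      ∀ (Y : Type u) [UniformSpace Y] (f : X × Y → ℝ), Semiuniform f →
        Continuous fun y : Y => μ fun x => f (x, y) := by
  constructor
  · -- uniform measure ⇒ continuity
    intro hUM Y _ f hf
    obtain ⟨⟨C, hC⟩, hequi, hsec⟩ := hf
    rw [continuous_iff_continuousAt]
    intro y₀
    rw [ContinuousAt, Metric.tendsto_nhds]
    intro ε hε
    set H : Set (X → ℝ) := Set.range (fun y : Y => fun x => f (x, y)) with hH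
    have hbd : ∃ C, ∀ g ∈ H, ∀ x, |g x| ≤ C := by
      refine ⟨C, ?_⟩
      rintro g ⟨y, rfl⟩ x
      exact hC (x, y)
    have hue : H.UniformEquicontinuous := by
      intro U hU
      filter_upwards [hequi U hU] with p hp g
      obtain ⟨y, hy⟩ := g.2
      rw [← hy]
      exact hp y
    have hf₀ : (fun x => f (x, y₀)) ∈ H := ⟨y₀, rfl⟩
    obtain ⟨K, δ, hδ, hK⟩ := hUM H hbd hue _ hf₀ ε hε
    have hev : ∀ᶠ y in 𝓝 y₀, ∀ x ∈ K, |f (x, y) - f (x, y₀)| < δ := by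
      rw [eventually_all_finset]
      intro x hx
      have := ((hsec x).continuous.tendsto y₀)
      have h2 := Metric.tendsto_nhds.mp this δ hδ
      filter_upwards [h2] with y hy
      rwa [Real.dist_eq] at hy
    filter_upwards [hev] with y hy
    have := hK (fun x => f (x, y)) ⟨y, rfl⟩ hy
    rwa [Real.dist_eq]
  · -- continuity ⇒ uniform measure
    intro hcont H hbd hue f₀ hf₀ ε hε
    obtain ⟨C, hC⟩ := hbd
    set g : X × H → ℝ := fun p => p.2.1 p.1 with hg
    have hsemi : Semiuniform g := by
      refine ⟨⟨C, fun p => hC p.2.1 p.2.2 p.1⟩, ?_, ?_⟩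
      · exact hue
      · intro x
        exact (Pi.uniformContinuous_proj (fun _ : X => ℝ) x).comp
          uniformContinuous_subtype_val
    have hc := hcont (↥H) g hsemi
    have hca := hc.continuousAt (x := ⟨f₀, hf₀⟩)
    have hS : {t : ℝ | |t - μ f₀| < ε} ∈ 𝓝 (μ fun x => g (x, ⟨f₀, hf₀⟩)) := by
      have : (fun x => g (x, (⟨f₀, hf₀⟩ : H))) = f₀ := rfl
      rw [this]
      have : {t : ℝ | |t - μ f₀| < ε} = Metric.ball (μ f₀) ε := by
        ext t
        simp [Real.dist_eq]
      rw [this]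
      exact Metric.ball_mem_nhds _ hε
    have hpre := hca.preimage_mem_nhds hS
    rw [nhds_induced] at hpre
    obtain ⟨T, hT, hTsub⟩ := hpre
    rw [nhds_pi, Filter.mem_pi] at hT
    obtain ⟨I, hIfin, t, ht, htsub⟩ := hT
    choose δf hδf using fun i =>
      Metric.mem_nhds_iff.mp (ht i)
    set K : Finset X := hIfin.toFinset with hKdef
    obtain ⟨δ₀, hδ₀pos, hδ₀⟩ : ∃ δ₀ > 0, ∀ i ∈ K, δ₀ ≤ δf i := by
      rcases K.eq_empty_or_nonempty with h | h
      · exact ⟨1, one_pos, by simp [h]⟩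
      · refine ⟨K.inf' h δf, ?_, fun i hi => Finset.inf'_le _ hi⟩
        rw [gt_iff_lt, Finset.lt_inf'_iff]
        exact fun i _ => (hδf i).1
    refine ⟨K, δ₀, hδ₀pos, fun p hp hclose => ?_⟩
    have hmem : (⟨p, hp⟩ : H) ∈ Subtype.val ⁻¹' T := by
      apply Set.mem_preimage.mpr
      apply htsub
      intro i hi
      apply (hδf i).2
      have hiK : i ∈ K := hIfin.mem_toFinset.mpr hi
      have := hclose i hiK
      simp only [Metric.mem_ball, Real.dist_eq]
      exact lt_of_lt_of_le this (hδ₀ i hiK)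
    have := hTsub hmem
    exact this
end
end

section
/- Let X and Y be uniform spaces and let μ ∈ Meas(X) and ν ∈ Meas(Y) be uniform measures. Then the direct product μ ⊗ ν is a uniform measure on the semiuniform product; concretely: for every set F of semiuniform functions f : X × Y → ℝ with sup_{f∈F}‖f‖ < ∞, such that the family {x ↦ f(x,y) : f ∈ F, y ∈ Y} is uniformly equicontinuous on X and for each x ∈ X the family {y ↦ f(x,y) : f ∈ F} is uniformly equicontinuous on Y, the map f ↦ (μ ⊗ ν)(f) is continuous on F with respect to the topology of pointwise convergence on X × Y. -/
noncomputable section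

open Filter Topology

lemma aux_isUb_smul {Y : Type*} [UniformSpace Y] {h : Y → ℝ} (hh : IsUb h) (c : ℝ) :
    IsUb (c • h) := by
  obtain ⟨huc, C, hC⟩ := hh
  refine ⟨(uniformContinuous_const_smul c).comp huc, |c| * C, fun y => ?_⟩
  simp only [Pi.smul_apply, smul_eq_mul, abs_mul]
  exact mul_le_mul_of_nonneg_left (hC y) (abs_nonneg c)

lemma aux_isUb_sub {Y : Type*} [UniformSpace Y] {h h' : Y → ℝ} (hh : IsUb h) (hh' : IsUb h') :
    IsUb (fun y => h y - h' y) := by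
  obtain ⟨huc, C, hC⟩ := hh
  obtain ⟨huc', C', hC'⟩ := hh'
  exact ⟨huc.sub huc', C + C', fun y =>
    (abs_sub (h y) (h' y)).trans (add_le_add (hC y) (hC' y))⟩

lemma aux_measBound {Y : Type*} [UniformSpace Y] {ν : (Y → ℝ) → ℝ} (hν : IsMeas ν) :
    ∃ C₀ : ℝ, 0 ≤ C₀ ∧ ∀ h : Y → ℝ, IsUb h → ∀ B : ℝ, 0 < B → (∀ y, |h y| ≤ B) →
      |ν h| ≤ C₀ * B := by
  obtain ⟨hadd, hsmul, C₀, hC₀⟩ := hν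
  refine ⟨max C₀ 0, le_max_right _ _, fun h hh B hB hhB => ?_⟩
  have h1 : IsUb (B⁻¹ • h) := aux_isUb_smul hh B⁻¹
  have h2 : ∀ y, |(B⁻¹ • h) y| ≤ 1 := by
    intro y
    simp only [Pi.smul_apply, smul_eq_mul, abs_mul, abs_inv, abs_of_pos hB]
    rw [inv_mul_le_iff₀ hB]
    simpa using hhB y
  have h3 := hC₀ _ h1 h2
  have h4 : ν (B⁻¹ • h) = B⁻¹ * ν h := hsmul B⁻¹ h hh
  rw [h4, abs_mul, abs_inv, abs_of_pos hB, inv_mul_le_iff₀ hB] at h3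
  calc |ν h| ≤ C₀ * B := by linarith [h3]
    _ ≤ max C₀ 0 * B := by
        exact mul_le_mul_of_nonneg_right (le_max_left _ _) hB.le

lemma aux_meas_sub {Y : Type*} [UniformSpace Y] {ν : (Y → ℝ) → ℝ} (hν : IsMeas ν)
    {h h' : Y → ℝ} (hh : IsUb h) (hh' : IsUb h') :
    ν h - ν h' = ν (fun y => h y - h' y) := by
  obtain ⟨hadd, hsmul, _⟩ := hν
  have key : ν ((fun y => h y - h' y) + h') = ν (fun y => h y - h' y) + ν h' :=
    hadd _ _ (aux_isUb_sub hh hh') hh'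
  have heq : (fun y => h y - h' y) + h' = h := by funext y; simp
  rw [heq] at key
  linarith

lemma aux_finset_delta {α : Type*} (s : Finset α) (d : α → ℝ) (hd : ∀ x ∈ s, 0 < d x) :
    ∃ δ : ℝ, 0 < δ ∧ ∀ x ∈ s, δ ≤ d x := by
  rcases s.eq_empty_or_nonempty with rfl | hs
  · exact ⟨1, one_pos, by simp⟩
  · exact ⟨s.inf' hs d, (Finset.lt_inf'_iff hs).2 hd, fun x hx => Finset.inf'_le d hx⟩

theorem stmt10 {X Y : Type*} [UniformSpace X] [UniformSpace Y]
    (μ : (X → ℝ) → ℝ) (hμ : IsMeas μ) (hμu : IsUniformMeasure μ)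
    (ν : (Y → ℝ) → ℝ) (hν : IsMeas ν) (hνu : IsUniformMeasure ν)
    (F : Set (X × Y → ℝ)) (hF : ∀ f ∈ F, Semiuniform f)
    (C : ℝ) (hFC : ∀ f ∈ F, ∀ p, |f p| ≤ C)
    (hSU1 : UniformEquicontinuous
      (fun q : F × Y => fun x : X => q.1.1 (x, q.2)))
    (hSU2 : ∀ x : X, UniformEquicontinuous
      (fun f : F => fun y : Y => f.1 (x, y)))
    (f₀ : X × Y → ℝ) (hf₀ : f₀ ∈ F) (ε : ℝ) (hε : 0 < ε) :
    ∃ (K : Finset (X × Y)) (δ : ℝ), 0 < δ ∧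
      ∀ f ∈ F, (∀ p ∈ K, |f p - f₀ p| < δ) →
        |dirProd μ ν f - dirProd μ ν f₀| < ε := by

  classical
  obtain ⟨Cν, hCν0, hCν⟩ := aux_measBound hν
  -- sections are in Ub(Y)
  have hsec : ∀ f ∈ F, ∀ x : X, IsUb (fun y => f (x, y)) := by
    intro f hf x
    exact ⟨(hF f hf).2.2 x, C, fun y => hFC f hf (x, y)⟩
  set G : (X × Y → ℝ) → (X → ℝ) := fun f => fun x => ν (fun y => f (x, y)) with hG
  set H : Set (X → ℝ) := G '' F with hH
  -- H is norm-bounded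
  have hHbdd : ∃ C' : ℝ, ∀ g ∈ H, ∀ x, |g x| ≤ C' := by
    refine ⟨Cν * (max C 1), ?_⟩
    rintro g ⟨f, hf, rfl⟩ x
    exact hCν _ (hsec f hf x) (max C 1) (lt_of_lt_of_le one_pos (le_max_right _ _))
      (fun y => (hFC f hf (x, y)).trans (le_max_left _ _))
  -- H is uniformly equicontinuous
  have hHequi : H.UniformEquicontinuous := by
    intro U hU
    obtain ⟨e, he, hball⟩ := Metric.mem_uniformity_dist.mp hU
    set e' : ℝ := e / (2 * (Cν + 1)) with he'def
    have he' : 0 < e' := by positivity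
    have key := hSU1 {p : ℝ × ℝ | dist p.1 p.2 < e'} (Metric.dist_mem_uniformity he')
    filter_upwards [key] with xy hxy g
    obtain ⟨f, hf, hgf⟩ := g.2
    apply hball
    have hdiff : ∀ y, |f (xy.1, y) - f (xy.2, y)| ≤ e' := by
      intro y
      have := hxy (⟨⟨f, hf⟩, y⟩ : F × Y)
      simp only [Set.mem_setOf_eq, Real.dist_eq] at this
      exact this.le
    have hsub := aux_meas_sub hν (hsec f hf xy.1) (hsec f hf xy.2)
    have hb := hCν _ (aux_isUb_sub (hsec f hf xy.1) (hsec f hf xy.2)) e' he'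
      (fun y => hdiff y)
    rw [← hsub] at hb
    have : |(g : X → ℝ) xy.1 - (g : X → ℝ) xy.2| ≤ Cν * e' := by
      rw [← hgf]; exact hb
    rw [Real.dist_eq]
    have hlt : Cν * e' < e := by
      rw [he'def]
      rw [div_eq_mul_inv, ← mul_assoc]
      rw [mul_inv_lt_iff₀ (by positivity)]
      nlinarith
    exact lt_of_le_of_lt this hlt
  have hg₀ : G f₀ ∈ H := ⟨f₀, hf₀, rfl⟩
  obtain ⟨KX, δ₁, hδ₁, hmain⟩ := hμu H hHbdd hHequi (G f₀) hg₀ ε hε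
  -- for each x, apply the ν-side
  have hxstep : ∀ x : X, ∃ (Ky : Finset Y) (δ' : ℝ), 0 < δ' ∧
      ∀ h ∈ (fun f : X × Y → ℝ => fun y => f (x, y)) '' F,
        (∀ y ∈ Ky, |h y - f₀ (x, y)| < δ') →
          |ν h - ν (fun y => f₀ (x, y))| < δ₁ := by
    intro x
    have hbdd : ∃ C' : ℝ, ∀ h ∈ (fun f : X × Y → ℝ => fun y => f (x, y)) '' F, ∀ y, |h y| ≤ C' := by
      refine ⟨C, ?_⟩; rintro h ⟨f, hf, rfl⟩ y; exact hFC f hf (x, y)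
    have hequi : ((fun f : X × Y → ℝ => fun y => f (x, y)) '' F).UniformEquicontinuous := by
      intro U hU
      filter_upwards [hSU2 x U hU] with yy hyy h
      obtain ⟨f, hf, hfh⟩ := h.2
      have h2 := hyy (⟨f, hf⟩ : F)
      have hfh' : (h : Y → ℝ) = fun y => f (x, y) := hfh.symm
      rw [hfh']
      exact h2
    obtain ⟨Ky, δ', hδ', hprop⟩ := hνu _ hbdd hequi (fun y => f₀ (x, y)) ⟨f₀, hf₀, rfl⟩ δ₁ hδ₁
    exact ⟨Ky, δ', hδ', hprop⟩
  choose Ky δy hδy hKy using hxstep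
  obtain ⟨δ, hδ, hδle⟩ := aux_finset_delta KX δy (fun x _ => hδy x)
  refine ⟨KX.biUnion (fun x => (Ky x).image (fun y => (x, y))), δ, hδ, ?_⟩
  intro f hf hsmall
  have hGf : G f ∈ H := ⟨f, hf, rfl⟩
  have : |μ (G f) - μ (G f₀)| < ε := by
    apply hmain (G f) hGf
    intro x hx
    have := hKy x (fun y => f (x, y)) ⟨f, hf, rfl⟩ ?_
    · exact this
    · intro y hy
      have hp : (x, y) ∈ KX.biUnion (fun x => (Ky x).image (fun y => (x, y))) := by
        apply Finset.mem_biUnion.2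
        exact ⟨x, hx, Finset.mem_image.2 ⟨y, hy, rfl⟩⟩
      exact lt_of_lt_of_le (hsmall (x, y) hp) (hδle x hx)
  exact this
end
end
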